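/- arXiv:1004.3085 — 2 statements merged into one kernel-verified Lean document; each statement's English description precedes it below -/
import Mathlib

section
/- For every n ∈ ℕ, every integer l with 1 ≤ l ≤ n, every x^n ∈ 𝒳^n, and every a^l ∈ 𝒳^l, the overlapping and non-overlapping empirical distributions satisfy the exact identity (n − l + 1) · p_l(a^l | x^n) = Σ_{s=0}^{l−1} ⌊(n − s)/l⌋ · q_{l;s}(a^l | x^n); equivalently, the number of indices 1 ≤ i ≤ n − l + 1 with x_i^{i+l−1} = a^l equals the total number of pairs (s, i) with 0 ≤ s < l and 0 ≤ i < ⌊(n−s)/l⌋ such that x_{il+1+s}^{(i+1)l+s} = a^l. -/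
section Empirical

variable {𝒳 : Type} [Nonempty 𝒳] [DecidableEq 𝒳]

/-- The length-`l` subblock of `x^n` starting at (0-based) position `start`,
i.e. `x_{start+1}^{start+l}` in 1-based notation (junk outside the range). -/
noncomputable def subblock {n : ℕ} (x : Fin n → 𝒳) (start l : ℕ) : Fin l → 𝒳 :=
  fun t => if h : start + (t : ℕ) < n then x ⟨start + t, h⟩ else Classical.arbitrary 𝒳

/-- The overlapping empirical distribution `p_l(a^l | x^n)`. -/
noncomputable def pEmp {n : ℕ} (l : ℕ) (x : Fin n → 𝒳) (a : Fin l → 𝒳) : ℝ :=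
  (((Finset.range (n - l + 1)).filter fun i => subblock x i l = a).card : ℝ) /
    ((n - l + 1 : ℕ) : ℝ)

/-- The non-overlapping empirical distribution `q_{l;s}(a^l | x^n)` with offset `s`. -/
noncomputable def qEmp {n : ℕ} (l s : ℕ) (x : Fin n → 𝒳) (a : Fin l → 𝒳) : ℝ :=
  (((Finset.range ((n - s) / l)).filter fun i => subblock x (i * l + s) l = a).card : ℝ) /
    (((n - s) / l : ℕ) : ℝ)

end Empirical

/-! Every start position `j < n - l + 1` is uniquely `j = i * l + s` with `s = j % l`, and
`i < ⌊(n - s) / l⌋` says exactly that the block starting there fits into `x^n`. Sorting the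
occurrences of `a^l` by the residue `s` gives the count identity; the identity for the empirical
distributions is that count identity with each frequency multiplied back by its denominator. -/

open Finset

lemma natCast_mul_card_filter_range_div (N : ℕ) (p : ℕ → Prop) [DecidablePred p] :
    (N : ℝ) * (#{i ∈ range N | p i} / N) = #{i ∈ range N | p i} :=
  mul_div_cancel_of_imp' fun hN => by
    have hcard := card_filter_le (range N) p
    simp_all

lemma card_filter_range_eq_sum_residues {p : ℕ → Prop} [DecidablePred p] {N l : ℕ} (hl : 0 < l)
    (m : ℕ → ℕ) (hm : ∀ s < l, ∀ i, i < m s ↔ i * l + s < N) :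
    #{j ∈ range N | p j} = ∑ s ∈ range l, #{i ∈ range (m s) | p (i * l + s)} := by
  rw [card_eq_sum_card_fiberwise (f := (· % l)) (t := range l)
    (fun j _ => mem_range.2 (Nat.mod_lt j hl))]
  refine sum_congr rfl fun s hs => ?_
  have hs : s < l := mem_range.1 hs
  refine card_nbij' (fun j => j / l) (fun i => i * l + s) ?_ ?_ ?_ ?_
  · intro j hj
    simp only [mem_coe, mem_filter, mem_range] at hj ⊢
    obtain ⟨⟨hjN, hpj⟩, rfl⟩ := hj
    rw [hm _ hs, Nat.div_add_mod']
    exact ⟨hjN, hpj⟩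
  · intro i hi
    simp only [mem_coe, mem_filter, mem_range] at hi ⊢
    refine ⟨⟨(hm s hs i).1 hi.1, hi.2⟩, ?_⟩
    rw [Nat.mul_add_mod_self_right, Nat.mod_eq_of_lt hs]
  · intro j hj
    simp only [mem_coe, mem_filter] at hj
    simp only [← hj.2, Nat.div_add_mod']
  · intro i _
    show (i * l + s) / l = i
    rw [Nat.add_comm, Nat.add_mul_div_right _ _ hl, Nat.div_eq_of_lt hs, zero_add]

lemma lt_sub_div_iff_mul_add_lt_sub_add_one {n l s i : ℕ} (hl : 0 < l) (hln : l ≤ n) (hs : s < l) :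
    i < (n - s) / l ↔ i * l + s < n - l + 1 := by
  rw [← Nat.add_one_le_iff, Nat.le_div_iff_mul_le hl, add_one_mul]
  omega

/-- For `1 ≤ l ≤ n`, the overlapping and non-overlapping empirical distributions satisfy
`(n − l + 1) p_l(a^l|x^n) = Σ_{s=0}^{l−1} ⌊(n−s)/l⌋ q_{l;s}(a^l|x^n)`; equivalently, the number
of occurrences of `a^l` as an overlapping subblock equals the total number of pairs `(s, i)`
locating `a^l` as a non-overlapping block with offset `s`. -/
theorem overlapping_eq_sum_nonoverlapping
    {𝒳 : Type} [Nonempty 𝒳] [DecidableEq 𝒳]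
    {n l : ℕ} (hl : 1 ≤ l) (hln : l ≤ n) (x : Fin n → 𝒳) (a : Fin l → 𝒳) :
    ((n : ℝ) - l + 1) * pEmp l x a =
      ∑ s ∈ Finset.range l, (((n - s) / l : ℕ) : ℝ) * qEmp l s x a ∧
    ((Finset.range (n - l + 1)).filter fun i => subblock x i l = a).card =
      ∑ s ∈ Finset.range l,
        ((Finset.range ((n - s) / l)).filter fun i => subblock x (i * l + s) l = a).card := by
  have hcount := card_filter_range_eq_sum_residues (p := fun i => subblock x i l = a) hl
    (fun s => (n - s) / l) fun _ hs _ => lt_sub_div_iff_mul_add_lt_sub_add_one hl hln hs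
  refine ⟨?_, hcount⟩
  have hlength : (n : ℝ) - l + 1 = ((n - l + 1 : ℕ) : ℝ) := by push_cast [hln]; ring
  rw [hlength, pEmp, natCast_mul_card_filter_range_div, hcount, Nat.cast_sum]
  exact sum_congr rfl fun s _ => (natCast_mul_card_filter_range_div _ _).symm
end

section
/- For every n ∈ ℕ, every integer l with 1 ≤ l ≤ n and n ≥ 2l − 1, every x^n ∈ 𝒳^n, and every a^l ∈ 𝒳^l, the average over offsets of the non-overlapping empirical distributions is dominated by the overlapping empirical distribution: (1/l) Σ_{s=0}^{l−1} q_{l;s}(a^l | x^n) ≤ ((n − l + 1)/(n − 2l + 2)) · p_l(a^l | x^n). (This is the corrected form of inequality (4) of the paper; it follows from the identity (n − l + 1) p_l(a^l|x^n) = Σ_{s=0}^{l−1} ⌊(n−s)/l⌋ q_{l;s}(a^l|x^n) together with the bound ⌊(n−s)/l⌋ ≥ (n − 2l + 2)/l valid for 0 ≤ s ≤ l − 1.) -/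
/-!
Every length-`l` window of `x^n` starts at a position `i = j * l + s` with `s = i % l`, and it is
then the `j`-th block of the offset-`s` non-overlapping parsing; hence the overlapping count is the
sum over offsets of the non-overlapping counts, i.e.
`(n - l + 1) p_l = Σ_s ⌊(n - s)/l⌋ q_{l;s}`. Since `l ⌊(n - s)/l⌋ ≥ n - 2l + 2` for `s < l`, each
term dominates `(n - 2l + 2)/l · q_{l;s}`.
-/

open Finset

theorem sum_range_sum_range_div_offsets {M : Type*} [AddCommMonoid M] {n l : ℕ}
    (hl : 0 < l) (hln : l ≤ n) (f : ℕ → M) :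
    ∑ s ∈ range l, ∑ j ∈ range ((n - s) / l), f (j * l + s) = ∑ i ∈ range (n - l + 1), f i := by
  rw [sum_sigma']
  refine sum_nbij' (fun p => p.2 * l + p.1) (fun i => ⟨i % l, i / l⟩) ?_ ?_ ?_ ?_ fun _ _ => rfl
  · rintro ⟨s, j⟩ hsj
    simp only [mem_sigma, mem_range] at hsj
    have hj : (j + 1) * l ≤ n - s := (Nat.le_div_iff_mul_le hl).mp hsj.2
    simp only [mem_range]
    rw [add_mul, one_mul] at hj
    omega
  · intro i hi
    simp only [mem_range] at hi
    have hmod : i % l < l := Nat.mod_lt i hl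
    have hdiv : l * (i / l) + i % l = i := Nat.div_add_mod i l
    simp only [mem_sigma, mem_range]
    refine ⟨hmod, (Nat.le_div_iff_mul_le hl).mpr ?_⟩
    change (i / l + 1) * l ≤ n - i % l
    rw [add_mul, one_mul, mul_comm]
    omega
  · rintro ⟨s, j⟩ hsj
    simp only [mem_sigma, mem_range] at hsj
    have hmod : (j * l + s) % l = s := by
      rw [Nat.add_comm, Nat.add_mul_mod_self_right, Nat.mod_eq_of_lt hsj.1]
    have hdiv : (j * l + s) / l = j := by
      rw [Nat.add_comm, Nat.add_mul_div_right _ _ hl, Nat.div_eq_of_lt hsj.1, Nat.zero_add]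
    simp [hmod, hdiv]
  · intro i _
    exact Nat.div_add_mod' i l

theorem add_two_le_mul_div_sub_add {n l s : ℕ} (hs : s < l) :
    n + 2 ≤ l * ((n - s) / l) + 2 * l := by
  have h := Nat.lt_mul_div_succ (n - s) (Nat.zero_lt_of_lt hs)
  rw [mul_add, mul_one] at h
  omega

section Empirical

variable {𝒳 : Type} [Nonempty 𝒳] [DecidableEq 𝒳] {n : ℕ}

theorem qEmp_nonneg (l s : ℕ) (x : Fin n → 𝒳) (a : Fin l → 𝒳) : 0 ≤ qEmp l s x a := by
  unfold qEmp
  positivity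

theorem natCast_mul_qEmp (l s : ℕ) (x : Fin n → 𝒳) (a : Fin l → 𝒳) :
    (((n - s) / l : ℕ) : ℝ) * qEmp l s x a =
      #{j ∈ range ((n - s) / l) | subblock x (j * l + s) l = a} := by
  unfold qEmp
  rcases Nat.eq_zero_or_pos ((n - s) / l) with h | h
  · simp [h]
  · exact mul_div_cancel₀ _ (by positivity)

theorem natCast_mul_pEmp (l : ℕ) (x : Fin n → 𝒳) (a : Fin l → 𝒳) :
    ((n - l + 1 : ℕ) : ℝ) * pEmp l x a = #{i ∈ range (n - l + 1) | subblock x i l = a} := by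
  unfold pEmp
  exact mul_div_cancel₀ _ (Nat.cast_ne_zero.mpr (Nat.succ_ne_zero _))

theorem sum_natCast_mul_qEmp {l : ℕ} (hl : 0 < l) (hln : l ≤ n) (x : Fin n → 𝒳)
    (a : Fin l → 𝒳) :
    ∑ s ∈ range l, (((n - s) / l : ℕ) : ℝ) * qEmp l s x a =
      ((n - l + 1 : ℕ) : ℝ) * pEmp l x a := by
  simp only [natCast_mul_qEmp, natCast_mul_pEmp, card_filter]
  push_cast
  exact sum_range_sum_range_div_offsets hl hln fun i => if subblock x i l = a then 1 else 0

end Empirical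

/-- For `1 ≤ l ≤ n` with `n ≥ 2l − 1`, the average over offsets of the non-overlapping empirical
distributions is dominated by the overlapping empirical distribution:
`(1/l) Σ_{s=0}^{l−1} q_{l;s}(a^l | x^n) ≤ ((n − l + 1)/(n − 2l + 2)) · p_l(a^l | x^n)`. -/
theorem avg_nonoverlapping_le_overlapping
    {𝒳 : Type} [Nonempty 𝒳] [DecidableEq 𝒳]
    {n l : ℕ} (hl : 1 ≤ l) (hln : l ≤ n) (hn : 2 * l - 1 ≤ n)
    (x : Fin n → 𝒳) (a : Fin l → 𝒳) :
    (1 / (l : ℝ)) * ∑ s ∈ Finset.range l, qEmp l s x a ≤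
      (((n : ℝ) - l + 1) / ((n : ℝ) - 2 * l + 2)) * pEmp l x a := by
  have hlR : (0 : ℝ) < l := by exact_mod_cast hl
  have hD : (0 : ℝ) < n - 2 * l + 2 := by
    have h : ((2 * l : ℕ) : ℝ) ≤ n + 1 := by exact_mod_cast (by omega : 2 * l ≤ n + 1)
    push_cast at h
    linarith
  have hblocks (s : ℕ) (hs : s ∈ range l) : (n : ℝ) - 2 * l + 2 ≤ l * (((n - s) / l : ℕ) : ℝ) := by
    have h : ((n + 2 : ℕ) : ℝ) ≤ ((l * ((n - s) / l) + 2 * l : ℕ) : ℝ) :=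
      Nat.cast_le.mpr (add_two_le_mul_div_sub_add (mem_range.mp hs))
    push_cast at h
    linarith
  have key : ((n : ℝ) - 2 * l + 2) * ∑ s ∈ range l, qEmp l s x a ≤
      l * (((n : ℝ) - l + 1) * pEmp l x a) := calc
    _ = ∑ s ∈ range l, ((n : ℝ) - 2 * l + 2) * qEmp l s x a := mul_sum _ _ _
    _ ≤ ∑ s ∈ range l, l * ((((n - s) / l : ℕ) : ℝ) * qEmp l s x a) := by
      refine sum_le_sum fun s hs => ?_
      rw [← mul_assoc]
      exact mul_le_mul_of_nonneg_right (hblocks s hs) (qEmp_nonneg l s x a)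
    _ = l * (((n : ℝ) - l + 1) * pEmp l x a) := by
      rw [← mul_sum, sum_natCast_mul_qEmp hl hln, Nat.cast_add, Nat.cast_sub hln, Nat.cast_one]
  rw [one_div_mul_eq_div, div_le_iff₀ hlR, div_mul_eq_mul_div, div_mul_eq_mul_div,
    le_div_iff₀ hD]
  linarith
end
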